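/- Let d ≥ 1, let A, B, C be d×d complex matrices, and let ψ ∈ ℂᵈ. For t > 0 define g(t) = ∫_ℝ ∫_ℝ ‖(exp(t•A + w•B + u•C)).mulVec ψ − (exp(t•A + w•B)).mulVec ψ‖² dγ_t(w) dγ_{t³/12}(u), where γ_{σ²} is the Gaussian measure on ℝ with mean 0 and variance σ², exp is the matrix exponential, mulVec denotes matrix–vector multiplication, and ‖·‖ is the Euclidean norm on ℂᵈ, the integrand being integrated against the product of the two Gaussian measures. Then there exist constants K > 0 and t₀ > 0 such that for all 0 < t < t₀, g(t) ≤ K * t³. -/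

import Mathlib

open Matrix MeasureTheory ProbabilityTheory

attribute [local instance] Matrix.linftyOpNormedAddCommGroup Matrix.linftyOpNormedRing
  Matrix.linftyOpNormedAlgebra

open Real NormedSpace
open scoped NNReal Nat ENNReal

theorem aux_pow_sub {𝔸 : Type*} [NormedRing 𝔸] (X Y : 𝔸) {M : ℝ}
    (hX : ‖X‖ ≤ M) (hY : ‖Y‖ ≤ M) (n : ℕ) :
    ‖X ^ (n + 1) - Y ^ (n + 1)‖ ≤ (n + 1) * ‖X - Y‖ * M ^ n := by
  have hM : 0 ≤ M := le_trans (norm_nonneg X) hX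
  induction n with
  | zero => simp
  | succ n ih =>
    have key : X ^ (n + 2) - Y ^ (n + 2) = X * (X ^ (n+1) - Y ^ (n+1)) + (X - Y) * Y ^ (n+1) := by
      simp [mul_sub, sub_mul, ← pow_succ']
    have hYp : ‖Y ^ (n+1)‖ ≤ M ^ (n+1) :=
      le_trans (norm_pow_le' Y n.succ_pos) (pow_le_pow_left₀ (norm_nonneg Y) hY _)
    rw [key]
    calc ‖X * (X ^ (n+1) - Y ^ (n+1)) + (X - Y) * Y ^ (n+1)‖
        ≤ ‖X‖ * ‖X ^ (n+1) - Y ^ (n+1)‖ + ‖X - Y‖ * ‖Y ^ (n+1)‖ :=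
          le_trans (norm_add_le _ _) (add_le_add (norm_mul_le _ _) (norm_mul_le _ _))
      _ ≤ M * ((n + 1) * ‖X - Y‖ * M ^ n) + ‖X - Y‖ * M ^ (n+1) := by
          refine add_le_add (mul_le_mul hX ih (norm_nonneg _) hM) ?_
          exact mul_le_mul_of_nonneg_left hYp (norm_nonneg _)
      _ = (↑(n + 1) + 1) * ‖X - Y‖ * M ^ (n + 1) := by push_cast; ring

open NormedSpace
open scoped Nat

theorem aux_exp_sub {𝔸 : Type*} [NormedRing 𝔸] [NormedAlgebra ℂ 𝔸] [CompleteSpace 𝔸]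
    (X Y : 𝔸) {M : ℝ} (hX : ‖X‖ ≤ M) (hY : ‖Y‖ ≤ M)
    (hpow : ∀ n : ℕ, ‖X ^ (n + 1) - Y ^ (n + 1)‖ ≤ (n + 1) * ‖X - Y‖ * M ^ n) :
    ‖exp X - exp Y‖ ≤ ‖X - Y‖ * Real.exp M := by
  have hsum : HasSum (fun n : ℕ => (n !⁻¹ : ℂ) • (X ^ n - Y ^ n)) (exp X - exp Y) := by
    have := (exp_series_hasSum_exp' (𝕂 := ℂ) X).sub (exp_series_hasSum_exp' (𝕂 := ℂ) Y)
    simpa [smul_sub] using this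
  set b : ℕ → ℝ := fun n => Nat.rec 0 (fun k _ => ‖X - Y‖ * (M ^ k / k !)) n with hb
  have hbsum : HasSum b (‖X - Y‖ * Real.exp M) := by
    have h1 : HasSum (fun k : ℕ => ‖X - Y‖ * (M ^ k / k !)) (‖X - Y‖ * Real.exp M) := by
      have := expSeries_div_hasSum_exp M
      rw [Real.exp_eq_exp_ℝ]
      exact this.mul_left _
    have h2 : HasSum (fun n : ℕ => b (n + 1)) (‖X - Y‖ * Real.exp M) := h1
    have := (hasSum_nat_add_iff (f := b) 1).mp h2
    simpa [hb] using this
  have hle : ∀ n : ℕ, ‖(n !⁻¹ : ℂ) • (X ^ n - Y ^ n)‖ ≤ b n := by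
    intro n
    cases n with
    | zero => simp [hb]
    | succ k =>
      rw [norm_smul]
      have h1 : ‖((k + 1)!⁻¹ : ℂ)‖ = (((k + 1)! : ℝ))⁻¹ := by
        rw [norm_inv]
        norm_cast
      rw [h1]
      calc (((k + 1)! : ℝ))⁻¹ * ‖X ^ (k + 1) - Y ^ (k + 1)‖
          ≤ (((k + 1)! : ℝ))⁻¹ * ((k + 1) * ‖X - Y‖ * M ^ k) := by
            refine mul_le_mul_of_nonneg_left (hpow k) (by positivity)
        _ = ‖X - Y‖ * (M ^ k / k !) := by
            rw [Nat.factorial_succ]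
            push_cast
            have : ((k : ℝ) + 1) ≠ 0 := by positivity
            field_simp
      
  calc ‖exp X - exp Y‖ = ‖∑' n, (n !⁻¹ : ℂ) • (X ^ n - Y ^ n)‖ := by rw [hsum.tsum_eq]
    _ ≤ ∑' n, ‖(n !⁻¹ : ℂ) • (X ^ n - Y ^ n)‖ :=
        norm_tsum_le_tsum_norm (hbsum.summable.of_nonneg_of_le (fun n => norm_nonneg _) hle)
    _ ≤ ∑' n, b n :=
        Summable.tsum_le_tsum hle (hbsum.summable.of_nonneg_of_le (fun n => norm_nonneg _) hle) hbsum.summable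
    _ = ‖X - Y‖ * Real.exp M := hbsum.tsum_eq

open MeasureTheory ProbabilityTheory Real
open scoped NNReal

-- tilt identity
theorem aux_tilt (a : ℝ) (v : ℝ≥0) (x : ℝ) :
    rexp (a * x) * gaussianPDFReal 0 v x = rexp (a ^ 2 * v / 2) * gaussianPDFReal (a * v) v x := by
  rcases eq_or_ne v 0 with rfl | hv
  · simp [gaussianPDFReal]
  · have hv' : (0 : ℝ) < v := lt_of_le_of_ne v.coe_nonneg (by exact_mod_cast (Ne.symm hv))
    simp only [gaussianPDFReal, sub_zero]
    have hexp : rexp (a * x) * rexp (-x ^ 2 / (2 * (v:ℝ)))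
        = rexp (a ^ 2 * (v:ℝ) / 2) * rexp (-(x - a * (v:ℝ)) ^ 2 / (2 * (v:ℝ))) := by
      rw [← Real.exp_add, ← Real.exp_add]
      congr 1
      field_simp
      ring
    linear_combination (√(2 * π * (v:ℝ)))⁻¹ * hexp

theorem aux_integrable_tilt (a : ℝ) (v : ℝ≥0) :
    Integrable (fun x => rexp (a * x) * gaussianPDFReal 0 v x) := by
  have : (fun x => rexp (a * x) * gaussianPDFReal 0 v x)
      = fun x => rexp (a ^ 2 * v / 2) * gaussianPDFReal (a * v) v x := by
    funext x; exact aux_tilt a v x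
  rw [this]
  exact (integrable_gaussianPDFReal (a * v) v).const_mul _

theorem aux_integral_tilt (a : ℝ) (v : ℝ≥0) (hv : v ≠ 0) :
    ∫ x, rexp (a * x) * gaussianPDFReal 0 v x = rexp (a ^ 2 * v / 2) := by
  simp_rw [aux_tilt a v]
  rw [integral_const_mul, integral_gaussianPDFReal_eq_one (a * v) hv, mul_one]

theorem aux_abs_le (a x : ℝ) : rexp (a * |x|) ≤ rexp (a * x) + rexp (-(a * x)) := by
  rcases abs_cases x with ⟨h, _⟩ | ⟨h, _⟩
  · rw [h]; nlinarith [Real.exp_pos (-(a*x)), le_refl (rexp (a*x))]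
  · rw [h, mul_neg]; nlinarith [Real.exp_pos (a*x)]

theorem aux_integrable_abs (a : ℝ) (v : ℝ≥0) :
    Integrable (fun x => rexp (a * |x|) * gaussianPDFReal 0 v x) := by
  refine Integrable.mono' ((aux_integrable_tilt a v).add (aux_integrable_tilt (-a) v)) ?_ ?_
  · exact (((Real.continuous_exp.comp (continuous_const.mul continuous_abs)).measurable).mul
      (measurable_gaussianPDFReal 0 v)).aestronglyMeasurable
  · refine Filter.Eventually.of_forall fun x => ?_
    have hpdf := gaussianPDFReal_nonneg 0 v x
    rw [Real.norm_eq_abs, abs_of_nonneg (by positivity)]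
    have := aux_abs_le a x
    calc rexp (a * |x|) * gaussianPDFReal 0 v x
        ≤ (rexp (a * x) + rexp (-(a * x))) * gaussianPDFReal 0 v x := by nlinarith
      _ = rexp (a * x) * gaussianPDFReal 0 v x + rexp (-a * x) * gaussianPDFReal 0 v x := by
          rw [← neg_mul]; ring

theorem aux_integral_abs (a : ℝ) (v : ℝ≥0) (hv : v ≠ 0) :
    ∫ x, rexp (a * |x|) * gaussianPDFReal 0 v x ≤ 2 * rexp (a ^ 2 * v / 2) := by
  have h1 : ∫ x, rexp (a * |x|) * gaussianPDFReal 0 v x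
      ≤ ∫ x, (rexp (a * x) * gaussianPDFReal 0 v x + rexp (-a * x) * gaussianPDFReal 0 v x) := by
    refine integral_mono (aux_integrable_abs a v)
      ((aux_integrable_tilt a v).add (aux_integrable_tilt (-a) v)) fun x => ?_
    have hpdf := gaussianPDFReal_nonneg 0 v x
    have := aux_abs_le a x
    simp only [neg_mul]
    nlinarith
  rw [integral_add (aux_integrable_tilt a v) (aux_integrable_tilt (-a) v),
    aux_integral_tilt a v hv, aux_integral_tilt (-a) v hv] at h1
  calc ∫ x, rexp (a * |x|) * gaussianPDFReal 0 v x
      ≤ rexp (a ^ 2 * v / 2) + rexp ((-a) ^ 2 * v / 2) := h1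
    _ = 2 * rexp (a ^ 2 * v / 2) := by rw [neg_pow]; ring_nf

open MeasureTheory ProbabilityTheory Real
open scoped NNReal

theorem aux_integrable_gauss_dom (c : ℝ) (v b : ℝ≥0) :
    True := trivial

theorem aux_sq_pointwise (c : ℝ) (v : ℝ≥0) (hv : 0 < (v:ℝ)) {b : ℝ}
    (hbdef : b = 1/(2*(v:ℝ)) - 1/4) (hb0 : 0 < b) (x : ℝ) :
    x^2 * rexp (c * |x|) * gaussianPDFReal 0 v x
      ≤ rexp (c^2) * (√(2*π*(v:ℝ)))⁻¹ * ((2/b) * rexp (-(b/2) * x^2)) := by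
  have h1 : rexp (c * |x|) ≤ rexp (c^2 + x^2/4) := by
    apply Real.exp_le_exp.mpr
    have hca : c * |x| ≤ |c| * |x| := mul_le_mul_of_nonneg_right (le_abs_self c) (abs_nonneg x)
    nlinarith [sq_nonneg (|c| - |x|/2), sq_abs x, sq_abs c]
  have h2 : x^2 ≤ (2/b) * rexp (b/2 * x^2) := by
    have := Real.add_one_le_exp (b/2 * x^2)
    have h3 : b/2 * x^2 ≤ rexp (b/2 * x^2) := by nlinarith
    calc x^2 = (2/b)*(b/2*x^2) := by field_simp
      _ ≤ (2/b)*rexp (b/2*x^2) := by gcongr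
  simp only [gaussianPDFReal, sub_zero]
  have hexps : b/2*x^2 + (c^2 + x^2/4) + (-x^2/(2*(v:ℝ))) = c^2 + (-(b/2)*x^2) := by
    rw [hbdef]; field_simp; ring
  calc x^2 * rexp (c*|x|) * ((√(2*π*(v:ℝ)))⁻¹ * rexp (-x^2/(2*(v:ℝ))))
      ≤ ((2/b) * rexp (b/2*x^2)) * rexp (c^2 + x^2/4)
          * ((√(2*π*(v:ℝ)))⁻¹ * rexp (-x^2/(2*(v:ℝ)))) := by
        gcongr
      _ = (2/b) * (√(2*π*(v:ℝ)))⁻¹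
          * (rexp (b/2*x^2) * rexp (c^2 + x^2/4) * rexp (-x^2/(2*(v:ℝ)))) := by ring
      _ = (2/b) * (√(2*π*(v:ℝ)))⁻¹ * rexp (c^2 + (-(b/2)*x^2)) := by
          rw [← Real.exp_add, ← Real.exp_add, hexps]
      _ = rexp (c^2) * (√(2*π*(v:ℝ)))⁻¹ * ((2/b) * rexp (-(b/2) * x^2)) := by
          rw [Real.exp_add]; ring

theorem aux_integrable_sq (c : ℝ) (v : ℝ≥0) (hv : 0 < (v:ℝ)) (hv1 : (v:ℝ) ≤ 1) :
    Integrable (fun x => x^2 * rexp (c * |x|) * gaussianPDFReal 0 v x) := by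
  set b : ℝ := 1/(2*(v:ℝ)) - 1/4 with hbdef
  have hb0 : 0 < b := by
    rw [hbdef]; rw [sub_pos]; rw [div_lt_div_iff₀ (by norm_num) (by positivity)]; nlinarith
  refine Integrable.mono'
    (((integrable_exp_neg_mul_sq (by positivity : (0:ℝ) < b/2)).const_mul (2/b)).const_mul
      (rexp (c^2) * (√(2*π*(v:ℝ)))⁻¹)) ?_ ?_
  · refine Measurable.aestronglyMeasurable ?_
    exact ((measurable_id.pow_const 2).mul
      (Real.continuous_exp.measurable.comp (measurable_const.mul measurable_abs))).mul
      (measurable_gaussianPDFReal 0 v)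
  · refine Filter.Eventually.of_forall fun x => ?_
    have hpdf := gaussianPDFReal_nonneg 0 v x
    rw [Real.norm_eq_abs, abs_of_nonneg (by positivity)]
    have := aux_sq_pointwise c v hv hbdef hb0 x
    calc x^2 * rexp (c * |x|) * gaussianPDFReal 0 v x
        ≤ rexp (c^2) * (√(2*π*(v:ℝ)))⁻¹ * ((2/b) * rexp (-(b/2) * x^2)) := this
      _ = rexp (c^2) * (√(2*π*(v:ℝ)))⁻¹ * (2/b * rexp (-(b/2) * x^2)) := by ring

theorem aux_integral_sq (c : ℝ) (v : ℝ≥0) (hv : 0 < (v:ℝ)) (hv1 : (v:ℝ) ≤ 1) :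
    ∫ x, x^2 * rexp (c * |x|) * gaussianPDFReal 0 v x ≤ 16 * rexp (c^2) * v := by
  set b : ℝ := 1/(2*(v:ℝ)) - 1/4 with hbdef
  have hb0 : 0 < b := by
    rw [hbdef]; rw [sub_pos]; rw [div_lt_div_iff₀ (by norm_num) (by positivity)]; nlinarith
  have hb' : 1/(4*(v:ℝ)) ≤ b := by
    have heq : 1/(2*(v:ℝ)) - 1/4 - 1/(4*(v:ℝ)) = (1 - (v:ℝ))/(4*(v:ℝ)) := by
      field_simp; ring
    have hnn : (0:ℝ) ≤ (1 - (v:ℝ))/(4*(v:ℝ)) := div_nonneg (by linarith) (by positivity)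
    rw [hbdef]; linarith [heq ▸ hnn]
  have hS : (0:ℝ) < √(2*π*(v:ℝ)) := Real.sqrt_pos.mpr (by positivity)
  have hint : ∫ x, x^2 * rexp (c * |x|) * gaussianPDFReal 0 v x
      ≤ ∫ x, rexp (c^2) * (√(2*π*(v:ℝ)))⁻¹ * (2/b * rexp (-(b/2) * x^2)) := by
    refine integral_mono (aux_integrable_sq c v hv hv1) ?_ fun x => ?_
    · exact ((integrable_exp_neg_mul_sq (by positivity : (0:ℝ) < b/2)).const_mul
        (2/b)).const_mul (rexp (c^2) * (√(2*π*(v:ℝ)))⁻¹)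
    · have := aux_sq_pointwise c v hv hbdef hb0 x
      calc x^2 * rexp (c * |x|) * gaussianPDFReal 0 v x
          ≤ rexp (c^2) * (√(2*π*(v:ℝ)))⁻¹ * ((2/b) * rexp (-(b/2) * x^2)) := this
        _ = rexp (c^2) * (√(2*π*(v:ℝ)))⁻¹ * (2/b * rexp (-(b/2) * x^2)) := by ring
  have hval : ∫ x, rexp (c^2) * (√(2*π*(v:ℝ)))⁻¹ * (2/b * rexp (-(b/2) * x^2))
      = rexp (c^2) * (√(2*π*(v:ℝ)))⁻¹ * (2/b * √(π/(b/2))) := by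
    rw [integral_const_mul, integral_const_mul, integral_gaussian]
  have s1 : √(π/(b/2)) ≤ 2*√(2*π*(v:ℝ)) := by
    have h4 : π/(b/2) ≤ 2^2*(2*π*(v:ℝ)) := by
      rw [div_le_iff₀ (by positivity)]
      have h5 : 1 ≤ 4*(v:ℝ)*b := by
        rw [div_le_iff₀ (by positivity)] at hb'
        linarith
      calc π = π * 1 := (mul_one π).symm
        _ ≤ π * (4*(v:ℝ)*b) := mul_le_mul_of_nonneg_left h5 Real.pi_pos.le
        _ = 2^2*(2*π*(v:ℝ))*(b/2) := by ring
    calc √(π/(b/2)) ≤ √(2^2*(2*π*(v:ℝ))) := Real.sqrt_le_sqrt h4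
      _ = 2*√(2*π*(v:ℝ)) := by
          rw [Real.sqrt_mul (by norm_num), Real.sqrt_sq (by norm_num)]
  have s2 : 2/b ≤ 8*(v:ℝ) := by
    rw [div_le_iff₀ hb0]
    rw [div_le_iff₀ (by positivity)] at hb'
    nlinarith
  have s3 : (√(2*π*(v:ℝ)))⁻¹ * (2/b * √(π/(b/2))) ≤ 16*(v:ℝ) := by
    calc (√(2*π*(v:ℝ)))⁻¹ * (2/b * √(π/(b/2)))
        ≤ (√(2*π*(v:ℝ)))⁻¹ * (8*(v:ℝ) * (2*√(2*π*(v:ℝ)))) := by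
          gcongr <;> positivity
      _ = 16*(v:ℝ) * ((√(2*π*(v:ℝ)))⁻¹ * √(2*π*(v:ℝ))) := by ring
      _ = 16*(v:ℝ) := by rw [inv_mul_cancel₀ (ne_of_gt hS), mul_one]
  calc ∫ x, x^2 * rexp (c * |x|) * gaussianPDFReal 0 v x
      ≤ rexp (c^2) * (√(2*π*(v:ℝ)))⁻¹ * (2/b * √(π/(b/2))) := by rw [← hval]; exact hint
    _ = rexp (c^2) * ((√(2*π*(v:ℝ)))⁻¹ * (2/b * √(π/(b/2)))) := by ring
    _ ≤ rexp (c^2) * (16*(v:ℝ)) := by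
        refine mul_le_mul_of_nonneg_left s3 (le_of_lt (Real.exp_pos _))
    _ = 16 * rexp (c^2) * (v:ℝ) := by ring

open MeasureTheory ProbabilityTheory Real
open scoped NNReal ENNReal

theorem aux_integrable_gaussianReal_iff (v : ℝ≥0) (hv : v ≠ 0) (f : ℝ → ℝ) :
    Integrable f (gaussianReal 0 v) ↔
      Integrable (fun x => f x * gaussianPDFReal 0 v x) volume := by
  rw [gaussianReal_of_var_ne_zero 0 hv, gaussianPDF_def]
  rw [integrable_withDensity_iff ((measurable_gaussianPDFReal 0 v).ennreal_ofReal)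
    (Filter.Eventually.of_forall fun x => ENNReal.ofReal_lt_top)]
  refine integrable_congr (Filter.Eventually.of_forall fun x => ?_)
  simp only []
  rw [ENNReal.toReal_ofReal (gaussianPDFReal_nonneg 0 v x)]

theorem aux_integral_gaussianReal (v : ℝ≥0) (hv : v ≠ 0) (f : ℝ → ℝ) :
    ∫ x, f x ∂(gaussianReal 0 v) = ∫ x, f x * gaussianPDFReal 0 v x := by
  rw [gaussianReal_of_var_ne_zero 0 hv]
  have h : (fun x => gaussianPDF 0 v x)
      = fun x => ((Real.toNNReal (gaussianPDFReal 0 v x) : ℝ≥0) : ℝ≥0∞) := by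
    funext x; rfl
  rw [show Measure.withDensity volume (gaussianPDF 0 v)
      = Measure.withDensity volume
        (fun x => ((Real.toNNReal (gaussianPDFReal 0 v x) : ℝ≥0) : ℝ≥0∞)) by rw [← h]]
  rw [integral_withDensity_eq_integral_smul
    ((measurable_gaussianPDFReal 0 v).real_toNNReal) f]
  refine integral_congr_ae (Filter.Eventually.of_forall fun x => ?_)
  simp [NNReal.smul_def, Real.coe_toNNReal _ (gaussianPDFReal_nonneg 0 v x), mul_comm]


set_option maxHeartbeats 2000000 in
/-- **Mean-square size of the second-order Stratonovich correction** (cf. Theorem II.4).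
The mean-square difference between the one-step maps of Scheme II
(`ψ ↦ exp(tA + ΔW B + ΔU C)ψ`, with independent `ΔW ~ N(0, t)`, `ΔU ~ N(0, t³/12)`)
and Scheme I (`ψ ↦ exp(tA + ΔW B)ψ`) applied to a fixed state, measured in the
Euclidean norm `‖x‖² = ∑ i ‖x i‖²`, is of order `t³`. -/
theorem schemeII_schemeI_mean_square_difference
    (d : ℕ) (hd : 1 ≤ d)
    (A B C : Matrix (Fin d) (Fin d) ℂ) (ψ : Fin d → ℂ)
    (g : ℝ → ℝ)
    (hg : ∀ t : ℝ, 0 < t →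
      g t = ∫ u : ℝ, ∫ w : ℝ,
          ∑ i : Fin d,
            ‖(NormedSpace.exp (t • A + w • B + u • C)).mulVec ψ i
              - (NormedSpace.exp (t • A + w • B)).mulVec ψ i‖ ^ 2
        ∂(gaussianReal 0 t.toNNReal) ∂(gaussianReal 0 (t ^ 3 / 12).toNNReal)) :
    ∃ K > (0 : ℝ), ∃ t₀ > (0 : ℝ), ∀ t : ℝ, 0 < t → t < t₀ → g t ≤ K * t ^ 3 := by
  classical
  set a : ℝ := 2 * ‖B‖ with ha
  set cc : ℝ := 2 * ‖C‖ with hcc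
  set c₀ : ℝ := (d : ℝ) * ‖ψ‖ ^ 2 * ‖C‖ ^ 2 * Real.exp (2 * ‖A‖) with hc₀
  have hc₀0 : 0 ≤ c₀ := by rw [hc₀]; positivity
  set c₁ : ℝ := c₀ * (2 * Real.exp (a ^ 2 / 2)) with hc₁
  have hc₁0 : 0 ≤ c₁ := by rw [hc₁]; positivity
  refine ⟨c₁ * (16 * Real.exp (cc ^ 2)) / 12 + 1, by positivity, 1, one_pos, fun t ht ht1 => ?_⟩
  have htle : t ≤ 1 := ht1.le
  have hvw : ((t.toNNReal : ℝ≥0) : ℝ) = t := Real.coe_toNNReal t ht.le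
  have hvw0 : t.toNNReal ≠ 0 := by
    rw [ne_eq, Real.toNNReal_eq_zero]; push_neg; exact ht
  have hs : (0 : ℝ) < t ^ 3 / 12 := by positivity
  have hvu : (((t ^ 3 / 12).toNNReal : ℝ≥0) : ℝ) = t ^ 3 / 12 := Real.coe_toNNReal _ hs.le
  have hvu0 : (t ^ 3 / 12).toNNReal ≠ 0 := by
    rw [ne_eq, Real.toNNReal_eq_zero]; push_neg; exact hs
  rw [hg t ht]
  -- pointwise bound on the integrand
  have hpoint : ∀ u w : ℝ,
      (∑ i : Fin d, ‖(NormedSpace.exp (t • A + w • B + u • C)).mulVec ψ i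
          - (NormedSpace.exp (t • A + w • B)).mulVec ψ i‖ ^ 2)
        ≤ c₀ * (u ^ 2 * Real.exp (cc * |u|)) * Real.exp (a * |w|) := by
    intro u w
    set M : Matrix (Fin d) (Fin d) ℂ := t • A + w • B with hM
    set D : Matrix (Fin d) (Fin d) ℂ :=
      NormedSpace.exp (M + u • C) - NormedSpace.exp M with hD
    have hnormM : ‖M‖ ≤ ‖A‖ + |w| * ‖B‖ := by
      calc ‖M‖ ≤ ‖t • A‖ + ‖w • B‖ := norm_add_le _ _
        _ = |t| * ‖A‖ + |w| * ‖B‖ := by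
            rw [norm_smul, norm_smul, Real.norm_eq_abs, Real.norm_eq_abs]
        _ ≤ 1 * ‖A‖ + |w| * ‖B‖ := by
            have : |t| ≤ 1 := by rw [abs_of_pos ht]; exact htle
            have hA0 : (0:ℝ) ≤ ‖A‖ := norm_nonneg _
            nlinarith
        _ = ‖A‖ + |w| * ‖B‖ := by ring
    have hunorm : ‖u • C‖ = |u| * ‖C‖ := by rw [norm_smul, Real.norm_eq_abs]
    have hDle : ‖D‖ ≤ |u| * ‖C‖ * Real.exp (‖A‖ + |w| * ‖B‖ + |u| * ‖C‖) := by
      have h1 : ‖M + u • C‖ ≤ ‖M‖ + ‖u • C‖ := norm_add_le _ _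
      have h2 : ‖M‖ ≤ ‖M‖ + ‖u • C‖ := le_add_of_nonneg_right (norm_nonneg _)
      have h3 := aux_exp_sub (M + u • C) M h1 h2 (fun n => aux_pow_sub _ _ h1 h2 n)
      have h4 : M + u • C - M = u • C := by abel
      rw [h4, hunorm] at h3
      refine le_trans h3 ?_
      have hmono : Real.exp (‖M‖ + |u| * ‖C‖) ≤ Real.exp (‖A‖ + |w| * ‖B‖ + |u| * ‖C‖) := by
        refine Real.exp_le_exp.mpr ?_
        linarith
      have : (0:ℝ) ≤ |u| * ‖C‖ := by positivity
      exact mul_le_mul_of_nonneg_left hmono this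
    have hcomp : ∀ i : Fin d,
        ‖(NormedSpace.exp (t • A + w • B + u • C)).mulVec ψ i
          - (NormedSpace.exp (t • A + w • B)).mulVec ψ i‖ ≤ ‖D‖ * ‖ψ‖ := by
      intro i
      have heq : (NormedSpace.exp (t • A + w • B + u • C)).mulVec ψ i
          - (NormedSpace.exp (t • A + w • B)).mulVec ψ i = (D.mulVec ψ) i := by
        rw [hD, Matrix.sub_mulVec]
        rfl
      rw [heq]
      exact le_trans (norm_le_pi_norm (D.mulVec ψ) i) (Matrix.linfty_opNorm_mulVec D ψ)
    have hexp2 : Real.exp (‖A‖ + |w| * ‖B‖ + |u| * ‖C‖) ^ 2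
        = Real.exp (2 * ‖A‖) * (Real.exp (a * |w|) * Real.exp (cc * |u|)) := by
      rw [sq, ← Real.exp_add, ← Real.exp_add, ← Real.exp_add]
      congr 1
      rw [ha, hcc]
      ring
    calc (∑ i : Fin d, ‖(NormedSpace.exp (t • A + w • B + u • C)).mulVec ψ i
          - (NormedSpace.exp (t • A + w • B)).mulVec ψ i‖ ^ 2)
        ≤ ∑ _i : Fin d, (‖D‖ * ‖ψ‖) ^ 2 := by
          refine Finset.sum_le_sum fun i _ => ?_
          exact pow_le_pow_left₀ (norm_nonneg _) (hcomp i) 2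
      _ = (d : ℝ) * (‖D‖ * ‖ψ‖) ^ 2 := by
          rw [Finset.sum_const, Finset.card_univ, Fintype.card_fin, nsmul_eq_mul]
      _ ≤ (d : ℝ) * ((|u| * ‖C‖ * Real.exp (‖A‖ + |w| * ‖B‖ + |u| * ‖C‖)) * ‖ψ‖) ^ 2 := by
          have hD0 : (0:ℝ) ≤ ‖D‖ := norm_nonneg _
          have hψ0 : (0:ℝ) ≤ ‖ψ‖ := norm_nonneg _
          have := mul_le_mul_of_nonneg_right hDle hψ0
          have h5 : (‖D‖ * ‖ψ‖) ^ 2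
              ≤ ((|u| * ‖C‖ * Real.exp (‖A‖ + |w| * ‖B‖ + |u| * ‖C‖)) * ‖ψ‖) ^ 2 :=
            pow_le_pow_left₀ (by positivity) this 2
          exact mul_le_mul_of_nonneg_left h5 (by positivity)
      _ = c₀ * (u ^ 2 * Real.exp (cc * |u|)) * Real.exp (a * |w|) := by
          rw [mul_pow, mul_pow, mul_pow, sq_abs, hexp2, hc₀]
          ring
  -- inner integral bound
  have hinner : ∀ u : ℝ,
      (∫ w : ℝ, ∑ i : Fin d, ‖(NormedSpace.exp (t • A + w • B + u • C)).mulVec ψ i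
          - (NormedSpace.exp (t • A + w • B)).mulVec ψ i‖ ^ 2
        ∂(gaussianReal 0 t.toNNReal)) ≤ c₁ * (u ^ 2 * Real.exp (cc * |u|)) := by
    intro u
    have hGint : Integrable (fun w => c₀ * (u ^ 2 * Real.exp (cc * |u|)) * Real.exp (a * |w|))
        (gaussianReal 0 t.toNNReal) := by
      rw [aux_integrable_gaussianReal_iff _ hvw0]
      have h := (aux_integrable_abs a t.toNNReal).const_mul (c₀ * (u ^ 2 * Real.exp (cc * |u|)))
      refine h.congr (Filter.Eventually.of_forall fun x => ?_)
      ring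
    have h1 : (∫ w : ℝ, ∑ i : Fin d, ‖(NormedSpace.exp (t • A + w • B + u • C)).mulVec ψ i
          - (NormedSpace.exp (t • A + w • B)).mulVec ψ i‖ ^ 2
        ∂(gaussianReal 0 t.toNNReal))
        ≤ ∫ w : ℝ, c₀ * (u ^ 2 * Real.exp (cc * |u|)) * Real.exp (a * |w|)
            ∂(gaussianReal 0 t.toNNReal) := by
      refine integral_mono_of_nonneg (Filter.Eventually.of_forall fun w => ?_) hGint
        (Filter.Eventually.of_forall fun w => hpoint u w)
      positivity
    have h2 : ∫ w : ℝ, c₀ * (u ^ 2 * Real.exp (cc * |u|)) * Real.exp (a * |w|)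
          ∂(gaussianReal 0 t.toNNReal)
        = c₀ * (u ^ 2 * Real.exp (cc * |u|))
            * ∫ w : ℝ, Real.exp (a * |w|) ∂(gaussianReal 0 t.toNNReal) :=
      integral_const_mul _ _
    have h3 : ∫ w : ℝ, Real.exp (a * |w|) ∂(gaussianReal 0 t.toNNReal)
        ≤ 2 * Real.exp (a ^ 2 / 2) := by
      rw [aux_integral_gaussianReal _ hvw0]
      refine le_trans (aux_integral_abs a t.toNNReal hvw0) ?_
      have : a ^ 2 * ((t.toNNReal : ℝ≥0) : ℝ) / 2 ≤ a ^ 2 / 2 := by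
        rw [hvw]
        nlinarith [sq_nonneg a]
      have := Real.exp_le_exp.mpr this
      linarith
    calc (∫ w : ℝ, ∑ i : Fin d, ‖(NormedSpace.exp (t • A + w • B + u • C)).mulVec ψ i
          - (NormedSpace.exp (t • A + w • B)).mulVec ψ i‖ ^ 2
        ∂(gaussianReal 0 t.toNNReal))
        ≤ c₀ * (u ^ 2 * Real.exp (cc * |u|))
            * ∫ w : ℝ, Real.exp (a * |w|) ∂(gaussianReal 0 t.toNNReal) := by
          rw [← h2]; exact h1
      _ ≤ c₀ * (u ^ 2 * Real.exp (cc * |u|)) * (2 * Real.exp (a ^ 2 / 2)) := by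
          refine mul_le_mul_of_nonneg_left h3 (by positivity)
      _ = c₁ * (u ^ 2 * Real.exp (cc * |u|)) := by rw [hc₁]; ring
  -- outer integral bound
  have hGint2 : Integrable (fun u => c₁ * (u ^ 2 * Real.exp (cc * |u|)))
      (gaussianReal 0 (t ^ 3 / 12).toNNReal) := by
    rw [aux_integrable_gaussianReal_iff _ hvu0]
    have hbase := aux_integrable_sq cc (t ^ 3 / 12).toNNReal (by rw [hvu]; positivity)
      (by rw [hvu]; nlinarith [pow_le_one₀ ht.le htle (n := 3)])
    have h := hbase.const_mul c₁
    refine h.congr (Filter.Eventually.of_forall fun x => ?_)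
    ring
  have houter : (∫ u : ℝ, ∫ w : ℝ,
          ∑ i : Fin d, ‖(NormedSpace.exp (t • A + w • B + u • C)).mulVec ψ i
            - (NormedSpace.exp (t • A + w • B)).mulVec ψ i‖ ^ 2
        ∂(gaussianReal 0 t.toNNReal) ∂(gaussianReal 0 (t ^ 3 / 12).toNNReal))
      ≤ ∫ u : ℝ, c₁ * (u ^ 2 * Real.exp (cc * |u|))
          ∂(gaussianReal 0 (t ^ 3 / 12).toNNReal) := by
    refine integral_mono_of_nonneg (Filter.Eventually.of_forall fun u => ?_) hGint2
      (Filter.Eventually.of_forall fun u => hinner u)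
    exact integral_nonneg fun w => by positivity
  have hval : ∫ u : ℝ, c₁ * (u ^ 2 * Real.exp (cc * |u|))
        ∂(gaussianReal 0 (t ^ 3 / 12).toNNReal)
      ≤ c₁ * (16 * Real.exp (cc ^ 2) * (t ^ 3 / 12)) := by
    rw [aux_integral_gaussianReal _ hvu0]
    have heq : ∫ x : ℝ, c₁ * (x ^ 2 * Real.exp (cc * |x|))
          * gaussianPDFReal 0 (t ^ 3 / 12).toNNReal x
        = c₁ * ∫ x : ℝ, x ^ 2 * Real.exp (cc * |x|)
            * gaussianPDFReal 0 (t ^ 3 / 12).toNNReal x := by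
      rw [← integral_const_mul]
      refine integral_congr_ae (Filter.Eventually.of_forall fun x => ?_)
      ring
    rw [heq]
    have hbound := aux_integral_sq cc (t ^ 3 / 12).toNNReal (by rw [hvu]; positivity)
      (by rw [hvu]; nlinarith [pow_le_one₀ ht.le htle (n := 3)])
    rw [hvu] at hbound
    exact mul_le_mul_of_nonneg_left hbound hc₁0
  have ht3 : (0:ℝ) ≤ t ^ 3 := by positivity
  calc (∫ u : ℝ, ∫ w : ℝ,
          ∑ i : Fin d, ‖(NormedSpace.exp (t • A + w • B + u • C)).mulVec ψ i
            - (NormedSpace.exp (t • A + w • B)).mulVec ψ i‖ ^ 2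
        ∂(gaussianReal 0 t.toNNReal) ∂(gaussianReal 0 (t ^ 3 / 12).toNNReal))
      ≤ c₁ * (16 * Real.exp (cc ^ 2) * (t ^ 3 / 12)) := le_trans houter hval
    _ = (c₁ * (16 * Real.exp (cc ^ 2)) / 12) * t ^ 3 := by ring
    _ ≤ (c₁ * (16 * Real.exp (cc ^ 2)) / 12 + 1) * t ^ 3 := by nlinarith
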